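/- If H is a sub-episode of an episode G, then for every sequence s one has |nm(G;s)| ≤ |nm(H;s)|; that is, the quantity |nm(G;s)| is antimonotonic with respect to the sub-episode relation. -/

import Mathlib

open scoped Classical

/-- An episode: a finite DAG with nodes labeled by symbols of `σ`. -/
structure Episode (σ : Type) where
  nodes : Finset ℕ
  edges : Finset (ℕ × ℕ)
  lab : (v : ℕ) → v ∈ nodes → σ
  edges_mem : ∀ e ∈ edges, e.1 ∈ nodes ∧ e.2 ∈ nodes
  acyclic : ∀ v, ¬ Relation.TransGen (fun u w => (u, w) ∈ edges) v v

/-- `s` covers the episode `G`: an injective map of nodes to (0-based) positions of `s`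
matching labels and respecting the edge order. -/
def Covers {σ : Type} (s : List σ) (G : Episode σ) : Prop :=
  ∃ f : ℕ → ℕ, Set.InjOn f ↑G.nodes ∧
    (∀ v (hv : v ∈ G.nodes), s[f v]? = some (G.lab v hv)) ∧
    (∀ e ∈ G.edges, f e.1 < f e.2)

/-- The contiguous sub-window `s[i,j]` (1-based, inclusive). -/
def window {α : Type} (s : List α) (i j : ℕ) : List α := (s.take j).drop (i - 1)

/-- `s` is a minimal window for `G`: `s` covers `G` but no proper contiguous
sub-window `s[i,j]` with `(i,j) ≠ (1,L)` covers `G`. -/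
def IsMinWindow {σ : Type} (s : List σ) (G : Episode σ) : Prop :=
  Covers s G ∧ ∀ i j : ℕ, 1 ≤ i → i ≤ j → j ≤ s.length → (i, j) ≠ (1, s.length) →
    ¬ Covers (window s i j) G

/-- `H` is a sub-episode of `G`: a subset of the nodes and a subset of the edges,
keeping the labels. -/
def SubEpisode {σ : Type} (H G : Episode σ) : Prop :=
  H.nodes ⊆ G.nodes ∧ H.edges ⊆ G.edges ∧
    ∀ v (hv : v ∈ H.nodes) (hg : v ∈ G.nodes), H.lab v hv = G.lab v hg

/-- Two windows, given as 1-based inclusive index intervals, overlap if the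
intervals intersect. -/
def Overlap (w x : ℕ × ℕ) : Prop := w.1 ≤ x.2 ∧ x.1 ≤ w.2

/-- `w = (i,j)` is a minimal window of `G` in `s`: `s[i,j]` is a minimal window for `G`. -/
def MinWinAt {σ : Type} (G : Episode σ) (s : List σ) (w : ℕ × ℕ) : Prop :=
  1 ≤ w.1 ∧ w.1 ≤ w.2 ∧ w.2 ≤ s.length ∧ IsMinWindow (window s w.1 w.2) G

/-- The list of all minimal windows of `G` in `s`, in order of starting position. -/
noncomputable def minWinList {σ : Type} (G : Episode σ) (s : List σ) : List (ℕ × ℕ) :=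
  ((List.range (s.length + 1)).flatMap (fun i =>
      (List.range (s.length + 1)).map (fun j => (i, j)))).filter
    (fun w => MinWinAt G s w)

/-- Greedy selection: take the first window, discard all windows overlapping it, repeat. -/
noncomputable def greedy : List (ℕ × ℕ) → List (ℕ × ℕ)
  | [] => []
  | w :: rest => w :: greedy (rest.filter (fun x => ¬ Overlap w x))
termination_by l => l.length
decreasing_by
  simp only [List.length_cons, List.length_unattach]
  exact Nat.lt_succ_of_le ((List.length_filter_le _ _).trans (by simp))

/-- `nm G s`: the greedily chosen collection of non-overlapping minimal windows
of `G` in `s`. -/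
noncomputable def nm {σ : Type} (G : Episode σ) (s : List σ) : List (ℕ × ℕ) :=
  greedy (minWinList G s)


section AuxWindow
variable {α : Type}

theorem window_length (s : List α) (i j : ℕ) (h1 : 1 ≤ i) (h2 : i ≤ j) (h3 : j ≤ s.length) :
    (window s i j).length = j - i + 1 := by
  rw [window, List.length_drop, List.length_take, min_eq_left h3]
  omega

theorem window_window (s : List α) (a b i j : ℕ) (ha : 1 ≤ a) (hi : 1 ≤ i)
    (hj : j ≤ b - a + 1) (hab : a ≤ b) :
    window (window s a b) i j = window s (a + i - 1) (a + j - 1) := by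
  simp only [window]
  rw [List.take_drop, List.take_take, List.drop_drop]
  have h1 : (a - 1 + j) ⊓ b = a + j - 1 := by
    rw [min_eq_left (by omega)]; omega
  have h2 : a - 1 + (i - 1) = a + i - 1 - 1 := by omega
  rw [h1, h2]

end AuxWindow

theorem covers_sub {σ : Type} {H G : Episode σ} (h : SubEpisode H G) {t : List σ}
    (hc : Covers t G) : Covers t H := by
  obtain ⟨f, hinj, hlab, hedge⟩ := hc
  refine ⟨f, hinj.mono (Finset.coe_subset.mpr h.1), ?_, ?_⟩
  · intro v hv
    rw [h.2.2 v hv (h.1 hv)]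
    exact hlab v (h.1 hv)
  · intro e he
    exact hedge e (h.2.1 he)

theorem mem_minWinList {σ : Type} (G : Episode σ) (s : List σ) (w : ℕ × ℕ) :
    w ∈ minWinList G s ↔ MinWinAt G s w := by
  simp only [minWinList, List.mem_filter, List.mem_flatMap, List.mem_map, List.mem_range,
    decide_eq_true_eq]
  constructor
  · exact fun h => h.2
  · intro hw
    obtain ⟨h1, h2, h3, _⟩ := hw
    exact ⟨⟨w.1, by omega, w.2, by omega, Prod.mk.eta⟩, ⟨h1, h2, h3, ‹_›⟩⟩

theorem minWin_antichain {σ : Type} {G : Episode σ} {s : List σ} {w x : ℕ × ℕ}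
    (hw : MinWinAt G s w) (hx : MinWinAt G s x) (h1 : w.1 ≤ x.1) (h2 : x.2 ≤ w.2) : w = x := by
  obtain ⟨hw1, hw2, hw3, hwc, hwm⟩ := hw
  obtain ⟨hx1, hx2, hx3, hxc, _⟩ := hx
  have hlen : (window s w.1 w.2).length = w.2 - w.1 + 1 := window_length s w.1 w.2 hw1 hw2 hw3
  rw [hlen] at hwm
  by_contra hne
  have hww : window (window s w.1 w.2) (x.1 - w.1 + 1) (x.2 - w.1 + 1) = window s x.1 x.2 := by
    rw [window_window s w.1 w.2 _ _ hw1 (by omega) (by omega) hw2]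
    have e1 : w.1 + (x.1 - w.1 + 1) - 1 = x.1 := by omega
    have e2 : w.1 + (x.2 - w.1 + 1) - 1 = x.2 := by omega
    rw [e1, e2]
  refine hwm (x.1 - w.1 + 1) (x.2 - w.1 + 1) (by omega) (by omega) (by omega) ?_ ?_
  · intro hpair
    rw [Prod.mk.injEq] at hpair
    exact hne (Prod.ext (by omega) (by omega))
  · rw [hww]; exact hxc

theorem shrink {σ : Type} (H : Episode σ) (s : List σ) :
    ∀ n a b, b - a = n → 1 ≤ a → a ≤ b → b ≤ s.length → Covers (window s a b) H →
      ∃ x : ℕ × ℕ, MinWinAt H s x ∧ a ≤ x.1 ∧ x.2 ≤ b := by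
  intro n
  induction n using Nat.strong_induction_on with
  | _ n ih =>
    intro a b hn h1 h2 h3 hc
    by_cases hmin : IsMinWindow (window s a b) H
    · exact ⟨(a, b), ⟨h1, h2, h3, hmin⟩, le_refl _, le_refl _⟩
    · have hmin' : ¬ ∀ i j : ℕ, 1 ≤ i → i ≤ j → j ≤ (window s a b).length →
          (i, j) ≠ (1, (window s a b).length) → ¬ Covers (window (window s a b) i j) H :=
        fun hall => hmin ⟨hc, hall⟩
      push_neg at hmin'
      obtain ⟨i, j, hi1, hij, hjl, hne, hcov⟩ := hmin'
      have hlen : (window s a b).length = b - a + 1 := window_length s a b h1 h2 h3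
      rw [hlen] at hjl hne
      rw [window_window s a b i j h1 hi1 (by omega) h2] at hcov
      have hne' : ¬ (i = 1 ∧ j = b - a + 1) := by
        rintro ⟨e1, e2⟩; exact hne (by rw [e1, e2])
      obtain ⟨x, hx, hxa, hxb⟩ := ih ((a + j - 1) - (a + i - 1)) (by omega)
        (a + i - 1) (a + j - 1) rfl (by omega) (by omega) (by omega) hcov
      exact ⟨x, hx, by omega, by omega⟩

theorem greedy_nil : greedy [] = [] := by rw [greedy]

theorem greedy_cons (w : ℕ × ℕ) (rest : List (ℕ × ℕ)) :
    greedy (w :: rest) = w :: greedy (rest.filter (fun x => ¬ Overlap w x)) := by rw [greedy]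

theorem greedy_sublist : ∀ (l : List (ℕ × ℕ)), List.Sublist (greedy l) l := by
  have key : ∀ n (l : List (ℕ × ℕ)), l.length ≤ n → List.Sublist (greedy l) l := by
    intro n
    induction n with
    | zero =>
      intro l hl
      have : l = [] := List.eq_nil_of_length_eq_zero (Nat.le_zero.mp hl)
      subst this; rw [greedy_nil]
    | succ n ih =>
      intro l hl
      match l with
      | [] => rw [greedy_nil]
      | w :: rest =>
        rw [greedy_cons]
        refine List.Sublist.cons₂ w ?_
        exact ((ih _ (le_trans (List.length_filter_le _ _) (by simpa using hl))).trans
          List.filter_sublist)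
  exact fun l => key l.length l le_rfl

theorem chain_head_lt {x : ℕ × ℕ} {c : List (ℕ × ℕ)}
    (hc : List.Chain' (fun a b : ℕ × ℕ => a.2 < b.1) (x :: c))
    (hp : ∀ y ∈ c, y.1 ≤ y.2) : ∀ y ∈ c, x.2 < y.1 := by
  induction c generalizing x with
  | nil => intro y hy; exact absurd hy List.not_mem_nil
  | cons z t ihc =>
    intro y hy
    have hxz : x.2 < z.1 := (List.isChain_cons_cons.mp hc).1
    rcases List.mem_cons.mp hy with rfl | hyt
    · exact hxz
    · have hz12 : z.1 ≤ z.2 := hp z (List.mem_cons_self)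
      have := ihc (List.isChain_cons_cons.mp hc).2 (fun y hy => hp y (List.mem_cons_of_mem _ hy)) y hyt
      omega

theorem greedy_chain : ∀ n (l : List (ℕ × ℕ)), l.length ≤ n →
    l.Pairwise (fun a b : ℕ × ℕ => a.1 ≤ b.1 ∧ a.2 ≤ b.2) → (∀ w ∈ l, w.1 ≤ w.2) →
    List.Chain' (fun a b : ℕ × ℕ => a.2 < b.1) (greedy l) := by
  intro n
  induction n with
  | zero =>
    intro l hl _ _
    have : l = [] := List.eq_nil_of_length_eq_zero (Nat.le_zero.mp hl)
    subst this; rw [greedy_nil]; exact List.isChain_nil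
  | succ n ih =>
    intro l hl hs hp
    match l with
    | [] => rw [greedy_nil]; exact List.isChain_nil
    | w :: rest =>
      rw [greedy_cons, List.Chain', List.isChain_cons]
      constructor
      · intro y hy
        have hy1 : y ∈ greedy (rest.filter (fun x => ¬ Overlap w x)) := List.mem_of_mem_head? hy
        have hy2 : y ∈ rest.filter (fun x => ¬ Overlap w x) := (greedy_sublist _).subset hy1
        rw [List.mem_filter] at hy2
        have hno : ¬ Overlap w y := by simpa using hy2.2
        have hS : w.1 ≤ y.1 ∧ w.2 ≤ y.2 := List.rel_of_pairwise_cons hs hy2.1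
        have hy12 : y.1 ≤ y.2 := hp y (List.mem_cons_of_mem _ hy2.1)
        by_contra hle
        exact hno ⟨le_trans hS.1 hy12, by omega⟩
      · refine ih _ (le_trans (List.length_filter_le _ _) (by simpa using hl)) ?_ ?_
        · exact List.Pairwise.sublist (List.filter_sublist.trans (List.sublist_cons_self w rest)) hs
        · intro y hy
          exact hp y (List.mem_cons_of_mem _ (List.filter_sublist.subset hy))

theorem chain_le_greedy : ∀ n (l : List (ℕ × ℕ)), l.length ≤ n →
    l.Pairwise (fun a b : ℕ × ℕ => a.1 ≤ b.1 ∧ a.2 ≤ b.2) → (∀ w ∈ l, w.1 ≤ w.2) →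
    ∀ c : List (ℕ × ℕ), List.Chain' (fun a b : ℕ × ℕ => a.2 < b.1) c → (∀ y ∈ c, y ∈ l) →
    c.length ≤ (greedy l).length := by
  intro n
  induction n with
  | zero =>
    intro l hl _ _ c _ hmem
    have hl0 : l = [] := List.eq_nil_of_length_eq_zero (Nat.le_zero.mp hl)
    subst hl0
    have : c = [] := List.eq_nil_iff_forall_not_mem.mpr
      (fun y hy => absurd (hmem y hy) List.not_mem_nil)
    subst this; simp
  | succ n ih =>
    intro l hl hs hp c hc hmem
    match l with
    | [] =>
      have : c = [] := List.eq_nil_iff_forall_not_mem.mpr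
        (fun y hy => absurd (hmem y hy) List.not_mem_nil)
      subst this; simp
    | w :: rest =>
      match c with
      | [] => simp
      | x :: c' =>
        have hx : x ∈ w :: rest := hmem x (List.mem_cons_self)
        have hwx2 : w.2 ≤ x.2 := by
          rcases List.mem_cons.mp hx with rfl | h
          · exact le_rfl
          · exact (List.rel_of_pairwise_cons hs h).2
        have hp' : ∀ y ∈ c', y.1 ≤ y.2 :=
          fun y hy => hp y (hmem y (List.mem_cons_of_mem _ hy))
        have hgt : ∀ y ∈ c', x.2 < y.1 := chain_head_lt hc hp'
        have hsub : ∀ y ∈ c', y ∈ rest.filter (fun z => ¬ Overlap w z) := by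
          intro y hy
          have hyl : y ∈ w :: rest := hmem y (List.mem_cons_of_mem _ hy)
          have h1 : w.2 < y.1 := lt_of_le_of_lt hwx2 (hgt y hy)
          have hw12 : w.1 ≤ w.2 := hp w (List.mem_cons_self)
          have hyne : y ≠ w := by
            intro h; subst h; omega
          have hyr : y ∈ rest := (List.mem_cons.mp hyl).resolve_left hyne
          rw [List.mem_filter]
          refine ⟨hyr, ?_⟩
          simp [Overlap]
          omega
        rw [greedy_cons, List.length_cons, List.length_cons]
        refine Nat.succ_le_succ ?_
        refine ih _ (le_trans (List.length_filter_le _ _) (by simpa using hl)) ?_ ?_ c'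
          ((List.isChain_cons.mp hc).2) hsub
        · exact List.Pairwise.sublist (List.filter_sublist.trans (List.sublist_cons_self w rest)) hs
        · intro y hy
          exact hp y (List.mem_cons_of_mem _ (List.filter_sublist.subset hy))

theorem chain'_map_mem {R : ℕ × ℕ → ℕ × ℕ → Prop} {f : ℕ × ℕ → ℕ × ℕ} :
    ∀ l : List (ℕ × ℕ), List.Chain' R l → (∀ a ∈ l, ∀ b ∈ l, R a b → R (f a) (f b)) →
      List.Chain' R (l.map f) := by
  intro l
  induction l with
  | nil => intros; exact List.isChain_nil
  | cons a t ih =>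
    intro hc hab
    match t with
    | [] => exact List.isChain_singleton _
    | b :: t' =>
      rw [List.map_cons, List.map_cons, List.Chain', List.isChain_cons_cons]
      constructor
      · exact hab a (by simp) b (by simp) (List.isChain_cons_cons.mp hc).1
      · have := ih (List.isChain_cons_cons.mp hc).2
          (fun p hp q hq hpq => hab p (List.mem_cons_of_mem _ hp) q (List.mem_cons_of_mem _ hq) hpq)
        exact this

theorem sorted_minWinList {σ : Type} (G : Episode σ) (s : List σ) :
    (minWinList G s).Pairwise (fun a b : ℕ × ℕ => a.1 ≤ b.1 ∧ a.2 ≤ b.2) := by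
  have hbase : (((List.range (s.length + 1)).flatMap fun i =>
      (List.range (s.length + 1)).map fun j => (i, j))).Pairwise
      (fun a b : ℕ × ℕ => a.1 < b.1 ∨ (a.1 = b.1 ∧ a.2 < b.2)) := by
    rw [List.pairwise_flatMap]
    constructor
    · intro a _
      rw [List.pairwise_map]
      exact List.pairwise_lt_range.imp (fun h => Or.inr ⟨rfl, h⟩)
    · refine List.Pairwise.imp ?_ List.pairwise_lt_range
      intro i1 i2 h x hx y hy
      obtain ⟨j1, _, rfl⟩ := List.mem_map.mp hx
      obtain ⟨j2, _, rfl⟩ := List.mem_map.mp hy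
      exact Or.inl h
  have hpw : (minWinList G s).Pairwise (fun a b : ℕ × ℕ => a.1 < b.1 ∨ (a.1 = b.1 ∧ a.2 < b.2)) := by
    rw [minWinList]
    exact List.Pairwise.sublist List.filter_sublist hbase
  refine hpw.imp_of_mem ?_
  intro a b ha hb hlex
  have haM : MinWinAt G s a := (mem_minWinList G s a).mp ha
  have hbM : MinWinAt G s b := (mem_minWinList G s b).mp hb
  rcases hlex with h | ⟨h1, h2⟩
  · refine ⟨le_of_lt h, ?_⟩
    by_contra hle
    push_neg at hle
    have heq := minWin_antichain haM hbM (le_of_lt h) (le_of_lt hle)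
    rw [heq] at h
    exact lt_irrefl _ h
  · exact ⟨le_of_eq h1, le_of_lt h2⟩

theorem proper_minWinList {σ : Type} (G : Episode σ) (s : List σ) :
    ∀ w ∈ minWinList G s, w.1 ≤ w.2 :=
  fun w hw => ((mem_minWinList G s w).mp hw).2.1

/-- if `H` is a sub-episode of `G`, then `|nm(G;s)| ≤ |nm(H;s)|` for every
sequence `s`; i.e. `|nm(·;s)|` is antimonotonic with respect to the sub-episode relation. -/
theorem nm_antimonotonic {σ : Type} (G H : Episode σ) (hHG : SubEpisode H G)
    (s : List σ) : (nm G s).length ≤ (nm H s).length := by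
  have hGchain : List.Chain' (fun a b : ℕ × ℕ => a.2 < b.1) (nm G s) :=
    greedy_chain _ _ le_rfl (sorted_minWinList G s) (proper_minWinList G s)
  have hpick : ∀ w ∈ nm G s, ∃ x : ℕ × ℕ, MinWinAt H s x ∧ w.1 ≤ x.1 ∧ x.2 ≤ w.2 := by
    intro w hw
    have hwL : w ∈ minWinList G s := (greedy_sublist _).subset hw
    have hwM : MinWinAt G s w := (mem_minWinList G s w).mp hwL
    exact shrink H s _ w.1 w.2 rfl hwM.1 hwM.2.1 hwM.2.2.1 (covers_sub hHG hwM.2.2.2.1)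
  set f : ℕ × ℕ → ℕ × ℕ := fun w =>
    if h : ∃ x : ℕ × ℕ, MinWinAt H s x ∧ w.1 ≤ x.1 ∧ x.2 ≤ w.2 then h.choose else w with hf
  have hfspec : ∀ w ∈ nm G s, MinWinAt H s (f w) ∧ w.1 ≤ (f w).1 ∧ (f w).2 ≤ w.2 := by
    intro w hw
    have h := hpick w hw
    simp only [hf, dif_pos h]
    exact h.choose_spec
  have hc' : List.Chain' (fun a b : ℕ × ℕ => a.2 < b.1) ((nm G s).map f) :=
    chain'_map_mem _ hGchain (fun a ha b hb hab => by
      have h1 := hfspec a ha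
      have h2 := hfspec b hb
      omega)
  have hmem : ∀ y ∈ (nm G s).map f, y ∈ minWinList H s := by
    intro y hy
    obtain ⟨w, hw, rfl⟩ := List.mem_map.mp hy
    exact (mem_minWinList H s (f w)).mpr (hfspec w hw).1
  have hfin := chain_le_greedy (minWinList H s).length _ le_rfl (sorted_minWinList H s)
    (proper_minWinList H s) _ hc' hmem
  simpa [nm] using hfin
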